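/- arXiv:math/0201093 — 3 statements merged into one kernel-verified Lean document; each statement's English description precedes it below -/
import Mathlib

section
/- Let p,q ∈ ℤ both be nonzero, k = gcd(p,q), p = kp', q = kq'. The map sending the matrix [[1,np',c],[0,1,nq'],[0,0,1]] to (n, c - S_n) ∈ ℤ², where S_n = (1/2)p'q'n(n-1), is a group isomorphism from the centralizer of g = [[1,p,r],[0,1,q],[0,0,1]] in H₃ onto ℤ². -/
open Matrix

abbrev M3 := Matrix (Fin 3) (Fin 3) ℤ

/-- The unitriangular matrix with given entries, as a unit. -/
def heisU (x y z : ℤ) : (M3)ˣ where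
  val := !![1, x, z; 0, 1, y; 0, 0, 1]
  inv := !![1, -x, x*y - z; 0, 1, -y; 0, 0, 1]
  val_inv := by
    ext i j
    fin_cases i <;> fin_cases j <;>
      simp [Matrix.mul_apply, Fin.sum_univ_three, Matrix.one_apply, Matrix.vecHead, Matrix.vecTail] <;> ring
  inv_val := by
    ext i j
    fin_cases i <;> fin_cases j <;>
      simp [Matrix.mul_apply, Fin.sum_univ_three, Matrix.one_apply, Matrix.vecHead, Matrix.vecTail] <;> ring

lemma heisU_mul (x y z x' y' z' : ℤ) :
    heisU x y z * heisU x' y' z' = heisU (x+x') (y+y') (z+z'+x*y') := by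
  ext i j
  fin_cases i <;> fin_cases j <;>
    simp [heisU, Matrix.mul_apply, Fin.sum_univ_three, Matrix.vecHead, Matrix.vecTail] <;> ring

lemma heisU_inv (x y z : ℤ) : (heisU x y z)⁻¹ = heisU (-x) (-y) (x*y - z) := by
  ext i j
  fin_cases i <;> fin_cases j <;> simp [heisU, Matrix.vecHead, Matrix.vecTail] <;> ring

/-- The discrete Heisenberg group, as the group of 3×3 upper-triangular
integer matrices with 1's on the diagonal. -/
def Heis : Subgroup (M3)ˣ where
  carrier := {A | ∃ x y z : ℤ, A = heisU x y z}
  one_mem' := ⟨0, 0, 0, by ext i j; fin_cases i <;> fin_cases j <;> simp [heisU, Matrix.one_apply, Matrix.vecHead, Matrix.vecTail]⟩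
  mul_mem' := by
    rintro A B ⟨x, y, z, rfl⟩ ⟨x', y', z', rfl⟩
    exact ⟨_, _, _, heisU_mul x y z x' y' z'⟩
  inv_mem' := by
    rintro A ⟨x, y, z, rfl⟩
    exact ⟨_, _, _, heisU_inv x y z⟩

lemma heisU_inj {x y z x' y' z' : ℤ} (h : heisU x y z = heisU x' y' z') :
    x = x' ∧ y = y' ∧ z = z' := by
  have hv := congrArg Units.val h
  have h01 := congrFun (congrFun hv 0) 1
  have h12 := congrFun (congrFun hv 1) 2
  have h02 := congrFun (congrFun hv 0) 2
  simp [heisU] at h01 h12 h02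
  exact ⟨h01, h12, h02⟩


lemma heisU_congr {a b c a' b' c' : ℤ} (h1 : a = a') (h2 : b = b') (h3 : c = c') :
    heisU a b c = heisU a' b' c' := by rw [h1, h2, h3]


/-- For `g = !![1,p,r; 0,1,q; 0,0,1]` with `p, q ≠ 0`, `k = gcd(p,q)`, `p = k p'`,
`q = k q'`, the map sending `!![1,np',c; 0,1,nq'; 0,0,1]` to `(n, c - S_n)`, where
`S_n = p'q'n(n-1)/2`, is a group isomorphism from the centralizer of `g` in `H₃`
onto `ℤ²`. -/
theorem heisenberg_centralizer_explicit_iso (p q r p' q' : ℤ) (hp : p ≠ 0) (hq : q ≠ 0)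
    (hp' : p = (Int.gcd p q : ℤ) * p') (hq' : q = (Int.gcd p q : ℤ) * q') :
    let g : Heis := ⟨heisU p q r, ⟨p, q, r, rfl⟩⟩
    ∃ e : Subgroup.centralizer {g} ≃* Multiplicative (ℤ × ℤ),
      ∀ (h : Subgroup.centralizer {g}) (n c : ℤ),
        ((h : Heis) : (M3)ˣ) = heisU (n * p') (n * q') c →
          e h = Multiplicative.ofAdd (n, c - p' * q' * n * (n - 1) / 2) := by
  intro g
  set k : ℤ := (Int.gcd p q : ℤ) with hk
  have hkN : Int.gcd p q ≠ 0 := fun h => hp (Int.gcd_eq_zero_iff.mp h).1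
  have hk0 : k ≠ 0 := by simpa [hk] using hkN
  have hp'0 : p' ≠ 0 := fun h => hp (by rw [hp', h, mul_zero])
  have hq'0 : q' ≠ 0 := fun h => hq (by rw [hq', h, mul_zero])
  have hgcd1 : Int.gcd p' q' = 1 := by
    have h1 : Int.gcd p q = k.natAbs * Int.gcd p' q' := by
      conv_lhs => rw [hp', hq']
      exact Int.gcd_mul_left _ _ _
    have h2 : k.natAbs = Int.gcd p q := by simp [hk]
    rw [h2] at h1
    nlinarith [Nat.pos_of_ne_zero hkN, Int.gcd p' q']
  have hcop : IsCoprime p' q' := Int.isCoprime_iff_gcd_eq_one.mpr hgcd1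
  set T : ℤ → ℤ := fun n => p' * q' * n * (n - 1) / 2 with hT
  have hT2 : ∀ n : ℤ, 2 * T n = p' * q' * n * (n - 1) := by
    intro n
    have h1 : (2:ℤ) ∣ (n-1) * ((n-1)+1) := (Int.even_mul_succ_self (n-1)).two_dvd
    obtain ⟨m, hm⟩ := h1
    have h2 : (2:ℤ) ∣ p' * q' * n * (n - 1) := ⟨p' * q' * m, by linear_combination p' * q' * hm⟩
    exact Int.mul_ediv_cancel' h2
  have hadd : ∀ n m : ℤ, T (n + m) = T n + T m + p' * q' * (n * m) := by
    intro n m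
    have h1 := hT2 (n + m); have h2 := hT2 n; have h3 := hT2 m
    have : (2:ℤ) * T (n+m) = 2 * (T n + T m + p' * q' * (n * m)) := by
      linear_combination h1 - h2 - h3
    exact mul_left_cancel₀ two_ne_zero this
  have hmemC : ∀ x z : ℤ,
      (⟨heisU (x * p') (x * q') z, ⟨_, _, _, rfl⟩⟩ : Heis) ∈ Subgroup.centralizer {g} := by
    intro x z
    rw [Subgroup.mem_centralizer_iff]
    rintro j hj
    rw [Set.mem_singleton_iff] at hj
    subst hj
    apply Subtype.ext
    show (heisU p q r : (M3)ˣ) * heisU (x * p') (x * q') z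
        = heisU (x * p') (x * q') z * heisU p q r
    rw [heisU_mul, heisU_mul]
    exact heisU_congr (by ring) (by ring) (by rw [hp', hq']; ring)
  let Ffun : Multiplicative (ℤ × ℤ) → Subgroup.centralizer {g} := fun a =>
    ⟨⟨heisU ((Multiplicative.toAdd a).1 * p') ((Multiplicative.toAdd a).1 * q')
        ((Multiplicative.toAdd a).2 + T (Multiplicative.toAdd a).1), ⟨_, _, _, rfl⟩⟩,
      hmemC _ _⟩
  have Fmul : ∀ a b, Ffun (a * b) = Ffun a * Ffun b := by
    intro a b
    apply Subtype.ext; apply Subtype.ext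
    show heisU _ _ _ = (heisU _ _ _ : (M3)ˣ) * heisU _ _ _
    rw [heisU_mul]
    simp only [toAdd_mul, Prod.fst_add, Prod.snd_add]
    exact heisU_congr (by ring) (by ring) (by rw [hadd]; ring)
  have hT0 : T 0 = 0 := by simp [hT]
  let F : Multiplicative (ℤ × ℤ) →* Subgroup.centralizer {g} :=
    { toFun := Ffun, map_one' := by
        apply Subtype.ext; apply Subtype.ext
        show heisU ((0:ℤ) * p') ((0:ℤ) * q') ((0:ℤ) + T 0) = (1 : (M3)ˣ)
        rw [hT0]
        norm_num
        ext i j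
        fin_cases i <;> fin_cases j <;> simp [heisU, Matrix.one_apply, Matrix.vecHead, Matrix.vecTail],
      map_mul' := Fmul }
  have hinj : Function.Injective F := by
    intro a b hab
    have h0 := congrArg (fun x : Subgroup.centralizer {g} => ((x : Heis) : (M3)ˣ)) hab
    obtain ⟨h1, h2, h3⟩ := heisU_inj h0
    have e1 : (Multiplicative.toAdd a).1 = (Multiplicative.toAdd b).1 :=
      mul_right_cancel₀ hp'0 h1
    have e2 : (Multiplicative.toAdd a).2 = (Multiplicative.toAdd b).2 := by
      rw [e1] at h3; linarith
    exact Prod.ext e1 e2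
  have hsurj : Function.Surjective F := by
    intro h
    obtain ⟨x, y, z, hxyz⟩ := (h : Heis).2
    have hcomm := Subgroup.mem_centralizer_iff.mp h.2 g (Set.mem_singleton g)
    have hcv := congrArg (fun A : Heis => (A : (M3)ˣ)) hcomm
    have hmm : (heisU p q r : (M3)ˣ) * heisU x y z = heisU x y z * heisU p q r := by
      have h1 : ((h : Heis) : (M3)ˣ) = heisU x y z := hxyz
      rw [← h1]; exact hcv
    rw [heisU_mul, heisU_mul] at hmm
    obtain ⟨_, _, h3⟩ := heisU_inj hmm
    have hpy : p * y = x * q := by linarith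
    have hpy' : p' * y = x * q' := by
      apply mul_left_cancel₀ hk0
      rw [hp', hq'] at hpy
      linear_combination hpy
    obtain ⟨n, hn⟩ : p' ∣ x := hcop.dvd_of_dvd_mul_right ⟨y, hpy'.symm⟩
    have hy : y = n * q' := by
      apply mul_left_cancel₀ hp'0
      rw [hpy', hn]; ring
    refine ⟨Multiplicative.ofAdd (n, z - T n), ?_⟩
    apply Subtype.ext; apply Subtype.ext
    show (heisU _ _ _ : (M3)ˣ) = ((h : Heis) : (M3)ˣ)
    rw [hxyz]
    simp only [toAdd_ofAdd]
    exact heisU_congr (by rw [hn]; ring) (by rw [hy]) (by ring)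
  refine ⟨(MulEquiv.ofBijective F ⟨hinj, hsurj⟩).symm, ?_⟩
  intro h n c hmat
  rw [MulEquiv.symm_apply_eq]
  show h = F (Multiplicative.ofAdd (n, c - p' * q' * n * (n - 1) / 2))
  symm
  apply Subtype.ext; apply Subtype.ext
  show (heisU _ _ _ : (M3)ˣ) = ((h : Heis) : (M3)ˣ)
  rw [hmat]
  simp only [toAdd_ofAdd]
  exact heisU_congr rfl rfl (by show c - p' * q' * n * (n - 1) / 2 + T n = c; rw [hT]; ring)
end

section
/- In the discrete Heisenberg group H₃, two elements U^p V^q W^r and U^p V^q W^{r'} are conjugate whenever r ≡ r' (mod gcd(p,q)), where U, V are the standard generators and W = VUV⁻¹U⁻¹ is the central generator. -/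
open Matrix

lemma heisU_pow (x y z : ℤ) (h : x*y = 0) (n : ℕ) :
    heisU x y z ^ n = heisU (n*x) (n*y) (n*z) := by
  induction n with
  | zero =>
      simp only [pow_zero, Nat.cast_zero, zero_mul]
      ext i j
      fin_cases i <;> fin_cases j <;>
        simp [heisU, Matrix.one_apply, Matrix.vecHead, Matrix.vecTail]
  | succ n ih =>
      rw [pow_succ, ih, heisU_mul]
      refine heisU_congr ?_ ?_ ?_ <;> push_cast
      · ring
      · ring
      · linear_combination (n : ℤ) * h

lemma heisU_zpow (x y z : ℤ) (h : x*y = 0) (n : ℤ) :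
    heisU x y z ^ n = heisU (n*x) (n*y) (n*z) := by
  cases n with
  | ofNat n =>
      rw [Int.ofNat_eq_natCast, zpow_natCast, heisU_pow x y z h]
  | negSucc n =>
      rw [zpow_negSucc, heisU_pow x y z h, heisU_inv]
      refine heisU_congr ?_ ?_ ?_ <;> simp only [Int.negSucc_eq] <;> push_cast
      · ring
      · ring
      · linear_combination ((n:ℤ)+1)^2 * h

/-- In `H₃` with `U = !![1,1,0;0,1,0;0,0,1]`, `V = !![1,0,0;0,1,1;0,0,1]`,
`W = !![1,0,1;0,1,0;0,0,1]` central, the elements `U^p V^q W^r` and `U^p V^q W^r'`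
are conjugate in `H₃` whenever `r ≡ r' (mod gcd(p,q))`. -/
theorem heisenberg_conjugacy (p q r r' : ℤ) (hpq : (p, q) ≠ (0, 0))
    (hmod : (Int.gcd p q : ℤ) ∣ r - r') :
    ∃ h ∈ Heis, h * (heisU 1 0 0 ^ p * heisU 0 1 0 ^ q * heisU 0 0 1 ^ r) * h⁻¹ =
      heisU 1 0 0 ^ p * heisU 0 1 0 ^ q * heisU 0 0 1 ^ r' := by
  obtain ⟨k, hk⟩ := hmod
  set a := Int.gcdA p q
  set b := Int.gcdB p q
  have hg : (Int.gcd p q : ℤ) = p * a + q * b := Int.gcd_eq_gcd_ab p q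
  refine ⟨heisU (-(k*b)) (k*a) 0, ⟨_, _, _, rfl⟩, ?_⟩
  rw [heisU_zpow 1 0 0 (by ring) p, heisU_zpow 0 1 0 (by ring) q,
      heisU_zpow 0 0 1 (by ring) r, heisU_zpow 0 0 1 (by ring) r',
      heisU_inv]
  simp only [mul_one, mul_zero, zero_add, add_zero]
  simp only [heisU_mul]
  refine heisU_congr ?_ ?_ ?_
  · ring
  · ring
  · linear_combination hk + k*hg
end

section
/- Define derivations ∂₁ and ∂₂ of the group ring ℂH₃ on basis elements by ∂₁(U^p V^q W^r) = p·U^p V^q W^r and ∂₂(U^p V^q W^r) = q·U^p V^q W^r. Then ∂₁ and ∂₂ are well-defined derivations of ℂH₃, and neither is inner. -/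
open Matrix

/-- The generator `U` of `H₃`. -/
def Ug : Heis := ⟨heisU 1 0 0, ⟨1, 0, 0, rfl⟩⟩
/-- The generator `V` of `H₃`. -/
def Vg : Heis := ⟨heisU 0 1 0, ⟨0, 1, 0, rfl⟩⟩
/-- The central generator `W = VUV⁻¹U⁻¹`. -/
def Wg : Heis := Vg * Ug * Vg⁻¹ * Ug⁻¹

/-- The group ring `ℂH₃`. -/
abbrev CH3 := MonoidAlgebra ℂ Heis

/-- `W` as an element of the group ring. -/
noncomputable def WA : CH3 := MonoidAlgebra.of ℂ Heis Wg

/-!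
If `φ : G → k` is additive, `g ↦ φ g • g` extends linearly to a derivation of `k[G]`. An inner
derivation `a ↦ a * x - x * a` sends `g` to an element whose `g`-coefficient is `x 1 - x 1 = 0`,
so this derivation is outer as soon as `φ g ≠ 0` for some `g`. On `H₃` the entries `p` and `q`
are additive, and `p U = q V = 1`.
-/

namespace MonoidAlgebra

section Weight

variable {k G : Type*} [CommSemiring k] [Monoid G]

noncomputable def weightMap (φ : G → k) : MonoidAlgebra k G →ₗ[k] MonoidAlgebra k G :=
  (Finsupp.lsum k fun g => φ g • lsingle g) ∘ₗ (coeffLinearEquiv k).toLinearMap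

theorem weightMap_single (φ : G → k) (g : G) (c : k) :
    weightMap φ (single g c) = φ g • single g c := by
  simp [weightMap, lsingle_apply]

theorem weightMap_mul (φ : G → k) (hφ : ∀ g h, φ (g * h) = φ g + φ h)
    (a b : MonoidAlgebra k G) : weightMap φ (a * b) = weightMap φ a * b + a * weightMap φ b := by
  induction a using induction_linear with
  | zero => simp
  | add a a' ha ha' => simp only [add_mul, map_add, ha, ha']; abel
  | single g c =>
    induction b using induction_linear with
    | zero => simp
    | add b b' hb hb' => simp only [mul_add, map_add, hb, hb']; abel
    | single h c' =>
      simp only [single_mul_single, weightMap_single, hφ, add_smul, smul_mul_assoc,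
        mul_smul_comm]

end Weight

theorem coeff_commutator_single_one_self {k G : Type*} [Ring k] [Group G] (g : G)
    (x : MonoidAlgebra k G) : (single g 1 * x - x * single g 1).coeff g = 0 := by
  simp [coeff_single_mul_apply, coeff_mul_single_apply]

theorem not_exists_weightMap_eq_commutator {k G : Type*} [CommRing k] [Group G] (φ : G → k)
    {g : G} (hg : φ g ≠ 0) : ¬∃ x : MonoidAlgebra k G, ∀ a, weightMap φ a = a * x - x * a := by
  rintro ⟨x, hx⟩
  apply hg
  simpa [weightMap_single, coeff_commutator_single_one_self] using
    congr(($(hx (single g 1))).coeff g)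

end MonoidAlgebra

namespace Heis

theorem coe_mul_apply_zero_one (g h : Heis) :
    (((g * h : Heis) : (M3)ˣ) : M3) 0 1 = ((g : (M3)ˣ) : M3) 0 1 + ((h : (M3)ˣ) : M3) 0 1 := by
  obtain ⟨_, x, y, z, rfl⟩ := g
  obtain ⟨_, x', y', z', rfl⟩ := h
  rw [Subgroup.coe_mul, heisU_mul]
  simp [heisU]

theorem coe_mul_apply_one_two (g h : Heis) :
    (((g * h : Heis) : (M3)ˣ) : M3) 1 2 = ((g : (M3)ˣ) : M3) 1 2 + ((h : (M3)ˣ) : M3) 1 2 := by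
  obtain ⟨_, x, y, z, rfl⟩ := g
  obtain ⟨_, x', y', z', rfl⟩ := h
  rw [Subgroup.coe_mul, heisU_mul]
  simp [heisU]

end Heis

/-- There are derivations `∂₁, ∂₂` of `ℂH₃` with
`∂₁(U^p V^q W^r) = p · U^p V^q W^r` and `∂₂(U^p V^q W^r) = q · U^p V^q W^r`
(here `p` and `q` are read off as the `(0,1)` and `(1,2)` matrix entries),
and neither is inner. -/
theorem derivations_d1_d2 :
    ∃ d₁ d₂ : CH3 →ₗ[ℂ] CH3,
      (∀ g : Heis, d₁ (MonoidAlgebra.of ℂ Heis g) =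
        (((((g : (M3)ˣ) : M3) 0 1 : ℤ) : ℂ)) • MonoidAlgebra.of ℂ Heis g) ∧
      (∀ g : Heis, d₂ (MonoidAlgebra.of ℂ Heis g) =
        (((((g : (M3)ˣ) : M3) 1 2 : ℤ) : ℂ)) • MonoidAlgebra.of ℂ Heis g) ∧
      (∀ a b : CH3, d₁ (a * b) = d₁ a * b + a * d₁ b) ∧
      (∀ a b : CH3, d₂ (a * b) = d₂ a * b + a * d₂ b) ∧
      ¬(∃ x : CH3, ∀ a : CH3, d₁ a = a * x - x * a) ∧
      ¬(∃ x : CH3, ∀ a : CH3, d₂ a = a * x - x * a) := by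
  set p : Heis → ℂ := fun g => (((g : (M3)ˣ) : M3) 0 1 : ℤ)
  set q : Heis → ℂ := fun g => (((g : (M3)ˣ) : M3) 1 2 : ℤ)
  have hp : ∀ g h, p (g * h) = p g + p h := fun g h => by
    simp only [p, Heis.coe_mul_apply_zero_one, Int.cast_add]
  have hq : ∀ g h, q (g * h) = q g + q h := fun g h => by
    simp only [q, Heis.coe_mul_apply_one_two, Int.cast_add]
  have hpU : p Ug ≠ 0 := by simp [p, Ug, heisU]
  have hqV : q Vg ≠ 0 := by simp [q, Vg, heisU]
  open MonoidAlgebra in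
  exact ⟨weightMap p, weightMap q, fun g => weightMap_single p g 1, fun g => weightMap_single q g 1,
    weightMap_mul p hp, weightMap_mul q hq,
    not_exists_weightMap_eq_commutator p hpU, not_exists_weightMap_eq_commutator q hqV⟩
end
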